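/- arXiv:1805.09666 — 6 statements merged into one kernel-verified Lean document; each statement's English description precedes it below -/
import Mathlib

section
/- Let f : [0,1] → ℝ be continuous and let u, v ∈ C²([0,1]) satisfy −u''(x) + u(x)u'(x) = f(x) and −v''(x) + v(x)v'(x) = f(x) for all x ∈ (0,1), together with the boundary conditions u(0) = u(1) = 0 and v(0) = v(1) = 0. Then u = v. (Uniqueness of the stationary solution of the Burgers problem with Dirichlet boundary conditions.) -/
open Set Real

/-- A function with zero derivative on `Ioo 0 1`, continuous on `Icc 0 1`, is constant. -/
lemma aux_const_of_deriv_zero {h : ℝ → ℝ} (hc : ContinuousOn h (Icc 0 1))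
    (hd : ∀ x ∈ Ioo (0:ℝ) 1, HasDerivAt h 0 x) :
    ∀ x ∈ Icc (0:ℝ) 1, h x = h 0 := by
  intro x hx
  rcases eq_or_lt_of_le hx.1 with h0 | h0
  · rw [← h0]
  · obtain ⟨c, hcmem, hslope⟩ := exists_hasDerivAt_eq_slope h (fun _ => 0) h0
      (hc.mono (Icc_subset_Icc le_rfl hx.2))
      (fun y hy => hd y ⟨hy.1, lt_of_lt_of_le hy.2 hx.2⟩)
    have hx0 : x - 0 ≠ 0 := by linarith
    field_simp at hslope
    linarith

/-- Uniqueness of the stationary solution of the Burgers problem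
`-u'' + u u' = f` on `[0,1]` with homogeneous Dirichlet boundary conditions,
for `C²` solutions. -/
theorem stationary_burgers_dirichlet_unique
    (f u v : ℝ → ℝ)
    (hf : ContinuousOn f (Icc 0 1))
    (hu₁ : ∀ x ∈ Icc (0:ℝ) 1, DifferentiableAt ℝ u x)
    (hu₂ : ∀ x ∈ Icc (0:ℝ) 1, DifferentiableAt ℝ (deriv u) x)
    (hu₃ : ContinuousOn (deriv (deriv u)) (Icc 0 1))
    (hv₁ : ∀ x ∈ Icc (0:ℝ) 1, DifferentiableAt ℝ v x)
    (hv₂ : ∀ x ∈ Icc (0:ℝ) 1, DifferentiableAt ℝ (deriv v) x)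
    (hv₃ : ContinuousOn (deriv (deriv v)) (Icc 0 1))
    (hueq : ∀ x ∈ Ioo (0:ℝ) 1, -deriv (deriv u) x + u x * deriv u x = f x)
    (hveq : ∀ x ∈ Ioo (0:ℝ) 1, -deriv (deriv v) x + v x * deriv v x = f x)
    (hu0 : u 0 = 0) (hu1 : u 1 = 0) (hv0 : v 0 = 0) (hv1 : v 1 = 0) :
    ∀ x ∈ Icc (0:ℝ) 1, u x = v x := by
  -- clamp function
  set p : ℝ → ℝ := fun x => max 0 (min x 1) with hp
  have hpmem : ∀ x, p x ∈ Icc (0:ℝ) 1 := by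
    intro x
    constructor
    · exact le_max_left _ _
    · exact max_le (by norm_num) (min_le_right _ _)
  have hpc : Continuous p := continuous_const.max (continuous_id.min continuous_const)
  have hpid : ∀ x ∈ Icc (0:ℝ) 1, p x = x := by
    intro x hx
    simp [hp, min_eq_left hx.2, max_eq_right hx.1]
  -- the averaged coefficient, extended continuously to all of ℝ
  set a : ℝ → ℝ := fun x => (u (p x) + v (p x)) / 2 with haa
  have hac : Continuous a := by
    rw [continuous_iff_continuousAt]
    intro x
    have h1 : ContinuousAt u (p x) := (hu₁ _ (hpmem x)).continuousAt
    have h2 : ContinuousAt v (p x) := (hv₁ _ (hpmem x)).continuousAt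
    exact ((h1.comp hpc.continuousAt).add (h2.comp hpc.continuousAt)).div_const 2
  have haval : ∀ x ∈ Icc (0:ℝ) 1, a x = (u x + v x) / 2 := by
    intro x hx; simp [haa, hpid x hx]
  -- antiderivative of a
  set A : ℝ → ℝ := fun x => ∫ t in (0:ℝ)..x, a t with hAA
  have hA : ∀ x : ℝ, HasDerivAt A (a x) x := by
    intro x
    exact intervalIntegral.integral_hasDerivAt_right
      (hac.intervalIntegrable 0 x)
      (hac.stronglyMeasurableAtFilter _ _)
      hac.continuousAt
  -- derivative of w = u - v
  have hw' : ∀ x ∈ Icc (0:ℝ) 1, HasDerivAt (fun y => u y - v y)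
      (deriv u x - deriv v x) x := by
    intro x hx
    exact ((hu₁ x hx).hasDerivAt).sub ((hv₁ x hx).hasDerivAt)
  -- the conserved quantity h
  set h : ℝ → ℝ := fun x => -(deriv u x - deriv v x) + (u x + v x) / 2 * (u x - v x)
    with hh
  have hhc : ContinuousOn h (Icc 0 1) := by
    intro x hx
    have h1 : ContinuousAt (deriv u) x := (hu₂ x hx).continuousAt
    have h2 : ContinuousAt (deriv v) x := (hv₂ x hx).continuousAt
    have h3 : ContinuousAt u x := (hu₁ x hx).continuousAt
    have h4 : ContinuousAt v x := (hv₁ x hx).continuousAt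
    exact (((h1.sub h2).neg.add (((h3.add h4).div_const 2).mul
      (h3.sub h4)))).continuousWithinAt
  have hhd : ∀ x ∈ Ioo (0:ℝ) 1, HasDerivAt h 0 x := by
    intro x hx
    have hx' : x ∈ Icc (0:ℝ) 1 := ⟨le_of_lt hx.1, le_of_lt hx.2⟩
    have hu' : HasDerivAt u (deriv u x) x := (hu₁ x hx').hasDerivAt
    have hv' : HasDerivAt v (deriv v x) x := (hv₁ x hx').hasDerivAt
    have hu'' : HasDerivAt (deriv u) (deriv (deriv u) x) x := (hu₂ x hx').hasDerivAt
    have hv'' : HasDerivAt (deriv v) (deriv (deriv v) x) x := (hv₂ x hx').hasDerivAt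
    have key : deriv (deriv u) x - deriv (deriv v) x
        = u x * deriv u x - v x * deriv v x := by
      have e1 := hueq x hx
      have e2 := hveq x hx
      linarith
    have hd : HasDerivAt h
        (-(deriv (deriv u) x - deriv (deriv v) x)
          + ((deriv u x + deriv v x) / 2 * (u x - v x)
            + (u x + v x) / 2 * (deriv u x - deriv v x))) x := by
      exact ((hu''.sub hv'').neg).add
        ((((hu'.add hv').div_const 2).mul (hu'.sub hv')))
    have : (-(deriv (deriv u) x - deriv (deriv v) x)
          + ((deriv u x + deriv v x) / 2 * (u x - v x)
            + (u x + v x) / 2 * (deriv u x - deriv v x))) = 0 := by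
      rw [key]; ring
    rwa [this] at hd
  -- h is constant on [0,1]
  have hconst := aux_const_of_deriv_zero hhc hhd
  set C : ℝ := h 0 with hC
  -- g = w * exp(-A)
  set g : ℝ → ℝ := fun x => (u x - v x) * Real.exp (-A x) with hg
  have hgd : ∀ x ∈ Icc (0:ℝ) 1, HasDerivAt g (-C * Real.exp (-A x)) x := by
    intro x hx
    have hE : HasDerivAt (fun y => Real.exp (-A y)) (-a x * Real.exp (-A x)) x := by
      have := ((hA x).neg).exp
      simpa [mul_comm] using this
    have hd : HasDerivAt g ((deriv u x - deriv v x) * Real.exp (-A x)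
        + (u x - v x) * (-a x * Real.exp (-A x))) x := (hw' x hx).mul hE
    have heq : (deriv u x - deriv v x) * Real.exp (-A x)
        + (u x - v x) * (-a x * Real.exp (-A x)) = -C * Real.exp (-A x) := by
      rw [haval x hx, ← hconst x hx]
      simp only [hh]
      ring
    rwa [heq] at hd
  have hgc : ContinuousOn g (Icc 0 1) := fun x hx =>
    (hgd x hx).continuousAt.continuousWithinAt
  have hg0 : g 0 = 0 := by simp [hg, hu0, hv0]
  have hg1 : g 1 = 0 := by simp [hg, hu1, hv1]
  -- MVT forces C = 0
  have hC0 : C = 0 := by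
    obtain ⟨c, hcmem, hslope⟩ := exists_hasDerivAt_eq_slope g
      (fun x => -C * Real.exp (-A x)) (by norm_num : (0:ℝ) < 1) hgc
      (fun y hy => hgd y ⟨le_of_lt hy.1, le_of_lt hy.2⟩)
    rw [hg0, hg1] at hslope
    have hne : Real.exp (-A c) ≠ 0 := Real.exp_ne_zero _
    have : -C * Real.exp (-A c) = 0 := by rw [hslope]; ring
    rcases mul_eq_zero.mp this with h1 | h1
    · linarith
    · exact absurd h1 hne
  -- hence g is constant, equal to g 0 = 0
  have hgconst := aux_const_of_deriv_zero hgc (fun x hx => by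
    have := hgd x ⟨le_of_lt hx.1, le_of_lt hx.2⟩
    simpa [hC0] using this)
  intro x hx
  have := hgconst x hx
  rw [hg0] at this
  have hne : Real.exp (-A x) ≠ 0 := Real.exp_ne_zero _
  have : u x - v x = 0 := by
    have := mul_eq_zero.mp this
    tauto
  linarith
end

section
/- Let M > 0, put λ = M+1, and define ψ(x,τ) = ((e^{2λ} − e^{λx})/(e^{2λ} − e^{λ})) · e^{−τ/(e^{2λ}−1)}. Then for every x ∈ [0,1], every τ ≥ 0 and every a ∈ ℝ with |a| ≤ M there holds ∂_τψ(x,τ) − ∂_{xx}ψ(x,τ) − a·∂_xψ(x,τ) > 0; that is, ψ is a strict supersolution of every linear drift–diffusion operator whose drift coefficient is bounded by M in absolute value. -/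
open Set Real

/-- The barrier function
`ψ(x,τ) = ((e^{2λ} − e^{λx})/(e^{2λ} − e^{λ})) · e^{−τ/(e^{2λ}−1)}` with `λ = M+1`. -/
noncomputable def psi (M x τ : ℝ) : ℝ :=
  ((Real.exp (2 * (M + 1)) - Real.exp ((M + 1) * x)) /
      (Real.exp (2 * (M + 1)) - Real.exp (M + 1))) *
    Real.exp (-τ / (Real.exp (2 * (M + 1)) - 1))

/-- The barrier function `ψ` is a strict supersolution of every linear drift–diffusion
operator `∂_τ − ∂ₓₓ − a ∂ₓ` whose drift coefficient satisfies `|a| ≤ M`. -/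
theorem psi_strict_supersolution (M : ℝ) (hM : 0 < M) :
    ∀ x ∈ Icc (0:ℝ) 1, ∀ τ : ℝ, 0 ≤ τ → ∀ a : ℝ, |a| ≤ M →
      0 < deriv (fun s => psi M x s) τ
            - deriv (fun y => deriv (fun z => psi M z τ) y) x
            - a * deriv (fun y => psi M y τ) x := by
  intro x hx τ hτ a ha
  obtain ⟨hx0, hx1⟩ := hx
  simp only [psi]
  set l := M + 1 with hl
  set B := Real.exp (2 * l) - 1 with hBdef
  set D := Real.exp (2 * l) - Real.exp l with hDdef
  have hl1 : (1:ℝ) < l := by simp [hl]; linarith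
  have hB : 0 < B := by
    have : (1:ℝ) < Real.exp (2 * l) := by
      rw [Real.one_lt_exp_iff]; linarith
    simp [hBdef]; linarith
  have hD : 0 < D := by
    have : Real.exp l < Real.exp (2 * l) := Real.exp_lt_exp.mpr (by linarith)
    simp [hDdef]; linarith
  set E := Real.exp (-τ / B) with hEdef
  have hE : 0 < E := Real.exp_pos _
  -- time derivative
  have hdτ : deriv (fun s => (Real.exp (2 * l) - Real.exp (l * x)) / D * Real.exp (-s / B)) τ
      = (Real.exp (2 * l) - Real.exp (l * x)) / D * (E * (-1 / B)) := by
    have h1 : HasDerivAt (fun s : ℝ => -s / B) (-1 / B) τ := by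
      simpa using ((hasDerivAt_id τ).neg.div_const B)
    have h2 := (Real.hasDerivAt_exp (-τ / B)).comp τ h1
    exact (h2.const_mul _).deriv
  -- space derivative (as a function of y)
  have hexp : ∀ y : ℝ, HasDerivAt (fun z : ℝ => Real.exp (l * z)) (Real.exp (l * y) * l) y := by
    intro y
    have h1 : HasDerivAt (fun z : ℝ => l * z) l y := by
      simpa using (hasDerivAt_id y).const_mul l
    exact (Real.hasDerivAt_exp (l * y)).comp y h1
  have d1 : ∀ y : ℝ, deriv (fun z => (Real.exp (2 * l) - Real.exp (l * z)) / D * E) y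
      = -(Real.exp (l * y) * l) / D * E := by
    intro y
    exact ((((hexp y).const_sub (Real.exp (2 * l))).div_const D).mul_const E).deriv
  have d2 : deriv (fun y => deriv (fun z => (Real.exp (2 * l) - Real.exp (l * z)) / D * E) y) x
      = -(Real.exp (l * x) * l * l) / D * E := by
    have : (fun y => deriv (fun z => (Real.exp (2 * l) - Real.exp (l * z)) / D * E) y)
        = fun y => -(Real.exp (l * y) * l) / D * E := funext d1
    rw [this]
    exact (((((hexp x).mul_const l).neg).div_const D).mul_const E).deriv
  rw [hdτ, d2, d1 x]
  have he1 : 1 ≤ Real.exp (l * x) := Real.one_le_exp (by positivity)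
  have hla : 1 ≤ l + a := by
    have := abs_le.mp ha
    simp [hl]; linarith [this.1]
  have heq : (Real.exp (2 * l) - Real.exp (l * x)) / D * (E * (-1 / B))
        - -(Real.exp (l * x) * l * l) / D * E
        - a * (-(Real.exp (l * x) * l) / D * E)
      = E / (D * B) * (l * (Real.exp (l * x) * (l + a)) * B
          - (Real.exp (2 * l) - Real.exp (l * x))) := by
    field_simp
    ring
  rw [heq]
  apply mul_pos (div_pos hE (mul_pos hD hB))
  have hp : 1 ≤ Real.exp (l * x) * (l + a) := one_le_mul_of_one_le_of_one_le he1 hla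
  have hq : (M + 1) * 1 ≤ l * (Real.exp (l * x) * (l + a)) := by
    rw [← hl]
    exact mul_le_mul_of_nonneg_left hp (by linarith)
  have hr : (M + 1) * B ≤ l * (Real.exp (l * x) * (l + a)) * B :=
    mul_le_mul_of_nonneg_right (by linarith) hB.le
  have hAe : Real.exp (2 * l) - Real.exp (l * x) ≤ B := by
    simp [hBdef]; linarith
  nlinarith [mul_pos hM hB]
end

section
/- Let g : [0,1] → ℝ be continuously differentiable with g(0) = g(1) = 0. Then (max_{x∈[0,1]} |g(x)|)² ≤ (∫₀¹ g(x)² dx)^{1/2} · (∫₀¹ g'(x)² dx)^{1/2}, i.e. ‖g‖_{L∞} ≤ ‖g‖_{L²}^{1/2} ‖g'‖_{L²}^{1/2}. -/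
/-!
Since `(g²)' = 2 g g'`, integrating over `[0, x]` and over `[x, 1]` and using the boundary values
gives `2 g(x)² ≤ 2 ∫₀¹ |g| |g'|`; the Cauchy–Schwarz inequality then bounds `∫₀¹ |g| |g'|`
by `‖g‖_{L²} ‖g'‖_{L²}`.
-/

open Set Real MeasureTheory intervalIntegral

theorem integral_abs_mul_abs_le_sqrt_mul_sqrt {α : Type*} [MeasurableSpace α] {μ : Measure α}
    {f g : α → ℝ} (hf : MemLp f 2 μ) (hg : MemLp g 2 μ) :
    ∫ x, |f x| * |g x| ∂μ ≤ √(∫ x, f x ^ 2 ∂μ) * √(∫ x, g x ^ 2 ∂μ) := by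
  have hpow (h : α → ℝ) : (fun x => |h x| ^ (2 : ℝ)) = fun x => h x ^ 2 := by
    ext x; rw [rpow_two, sq_abs]
  have := integral_mul_le_Lp_mul_Lq_of_nonneg HolderConjugate.two_two
    (ae_of_all μ fun x => abs_nonneg (f x)) (ae_of_all μ fun x => abs_nonneg (g x))
    (by simpa using hf.norm) (by simpa using hg.norm)
  simpa only [hpow, ← sqrt_eq_rpow] using this

theorem ContinuousOn.memLp_two_restrict_Ioc {f : ℝ → ℝ} {a b : ℝ}
    (hf : ContinuousOn f (Icc a b)) : MemLp f 2 (volume.restrict (Ioc a b)) := by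
  have hf' := hf.mono Ioc_subset_Icc_self
  refine (memLp_two_iff_integrable_sq (hf'.aestronglyMeasurable measurableSet_Ioc)).2 ?_
  exact ((hf.pow 2).integrableOn_compact isCompact_Icc).mono_set Ioc_subset_Icc_self

theorem intervalIntegral.integral_abs_mul_abs_le_sqrt_mul_sqrt {f g : ℝ → ℝ} {a b : ℝ}
    (hab : a ≤ b) (hf : ContinuousOn f (Icc a b)) (hg : ContinuousOn g (Icc a b)) :
    ∫ x in a..b, |f x| * |g x| ≤ √(∫ x in a..b, f x ^ 2) * √(∫ x in a..b, g x ^ 2) := by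
  simp only [integral_of_le hab]
  exact _root_.integral_abs_mul_abs_le_sqrt_mul_sqrt hf.memLp_two_restrict_Ioc
    hg.memLp_two_restrict_Ioc

theorem abs_sq_sub_sq_le_two_mul_integral_abs_mul_abs_deriv {g g' : ℝ → ℝ} {a b : ℝ}
    (hab : a ≤ b) (hg : ∀ x ∈ Icc a b, HasDerivAt g (g' x) x)
    (hint : IntervalIntegrable (fun x => g x * g' x) volume a b) :
    |g b ^ 2 - g a ^ 2| ≤ 2 * ∫ x in a..b, |g x| * |g' x| := by
  have hsq : ∀ x ∈ uIcc a b, HasDerivAt (fun x => g x ^ 2) (2 * (g x * g' x)) x := by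
    intro x hx
    rw [uIcc_of_le hab] at hx
    simpa [mul_assoc] using (hg x hx).fun_pow 2
  rw [← integral_eq_sub_of_hasDerivAt hsq (hint.const_mul 2),
    ← intervalIntegral.integral_const_mul]
  refine (abs_integral_le_integral_abs hab).trans_eq ?_
  simp only [abs_mul, abs_two]

theorem sq_le_integral_abs_mul_abs_deriv {g g' : ℝ → ℝ} {a b x : ℝ}
    (hg : ∀ x ∈ Icc a b, HasDerivAt g (g' x) x) (hg' : ContinuousOn g' (Icc a b))
    (ha : g a = 0) (hb : g b = 0) (hx : x ∈ Icc a b) :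
    g x ^ 2 ≤ ∫ t in a..b, |g t| * |g' t| := by
  obtain ⟨hax, hxb⟩ := hx
  have hgc : ContinuousOn g (Icc a b) :=
    continuousOn_of_forall_continuousAt fun t ht => (hg t ht).continuousAt
  have hint {c d : ℝ} (hac : a ≤ c) (hcd : c ≤ d) (hdb : d ≤ b) :
      IntervalIntegrable (fun t => g t * g' t) volume c d :=
    ((hgc.mul hg').mono (Icc_subset_Icc hac hdb)).intervalIntegrable_of_Icc hcd
  have hint_abs {c d : ℝ} (hac : a ≤ c) (hcd : c ≤ d) (hdb : d ≤ b) :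
      IntervalIntegrable (fun t => |g t| * |g' t|) volume c d :=
    ((hgc.abs.mul hg'.abs).mono (Icc_subset_Icc hac hdb)).intervalIntegrable_of_Icc hcd
  have left := abs_sq_sub_sq_le_two_mul_integral_abs_mul_abs_deriv hax
    (fun t ht => hg t ⟨ht.1, ht.2.trans hxb⟩) (hint le_rfl hax hxb)
  have right := abs_sq_sub_sq_le_two_mul_integral_abs_mul_abs_deriv hxb
    (fun t ht => hg t ⟨hax.trans ht.1, ht.2⟩) (hint hax hxb le_rfl)
  rw [← integral_add_adjacent_intervals (hint_abs le_rfl hax hxb) (hint_abs hax hxb le_rfl)]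
  rw [ha] at left
  rw [hb] at right
  linarith [le_abs_self (g x ^ 2 - 0 ^ 2), neg_abs_le (0 ^ 2 - g x ^ 2)]

/-- Agmon-type interpolation inequality: for a `C¹` function `g` on `[0,1]` with
`g(0) = g(1) = 0` one has `‖g‖_{L∞}² ≤ ‖g‖_{L²} · ‖g'‖_{L²}`. -/
theorem sup_sq_le_L2_mul_L2_deriv
    (g g' : ℝ → ℝ)
    (hg : ∀ x ∈ Icc (0:ℝ) 1, HasDerivAt g (g' x) x)
    (hg' : ContinuousOn g' (Icc 0 1))
    (h0 : g 0 = 0) (h1 : g 1 = 0) :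
    ∀ x ∈ Icc (0:ℝ) 1,
      |g x| ^ 2 ≤ Real.sqrt (∫ x in (0:ℝ)..1, (g x) ^ 2) *
        Real.sqrt (∫ x in (0:ℝ)..1, (g' x) ^ 2) := by
  intro x hx
  have hgc : ContinuousOn g (Icc 0 1) :=
    continuousOn_of_forall_continuousAt fun t ht => (hg t ht).continuousAt
  calc |g x| ^ 2 = g x ^ 2 := sq_abs _
    _ ≤ ∫ t in (0:ℝ)..1, |g t| * |g' t| := sq_le_integral_abs_mul_abs_deriv hg hg' h0 h1 hx
    _ ≤ _ := intervalIntegral.integral_abs_mul_abs_le_sqrt_mul_sqrt zero_le_one hgc hg'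
end

section
/- Let g : [0,1] → ℝ be continuously differentiable with g(0) = g(1) = 0. Then ‖g‖_{L²} ≤ ‖g‖_{L¹}^{2/3} ‖g'‖_{L²}^{1/3}, i.e. (∫₀¹ g(x)² dx)^{1/2} ≤ (∫₀¹ |g(x)| dx)^{2/3} · (∫₀¹ g'(x)² dx)^{1/6}. -/
/-!
Since `g` vanishes at both ends, `g(x)²` is the integral of `(g²)' = 2gg'` from either end,
so `‖g‖_∞² ≤ ∫|gg'| ≤ ‖g‖₂ ‖g'‖₂` by Cauchy–Schwarz. Hence
`‖g‖₂² ≤ ‖g‖₁ ‖g‖_∞ ≤ ‖g‖₁ (‖g‖₂ ‖g'‖₂)^{1/2}`, which rearranges to the claim.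
-/

open Set Real MeasureTheory intervalIntegral

theorem two_mul_abs_le_integral_abs_deriv {f f' : ℝ → ℝ} {a b x : ℝ}
    (hf : ∀ t ∈ Icc a b, HasDerivAt f (f' t) t) (hf' : IntervalIntegrable f' volume a b)
    (ha : f a = 0) (hb : f b = 0) (hx : x ∈ Icc a b) :
    2 * |f x| ≤ ∫ t in a..b, |f' t| := by
  have hab : a ≤ b := hx.1.trans hx.2
  have hx' : x ∈ uIcc a b := Icc_subset_uIcc hx
  have hsub_left : uIcc a x ⊆ uIcc a b := uIcc_subset_uIcc left_mem_uIcc hx'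
  have hsub_right : uIcc x b ⊆ uIcc a b := uIcc_subset_uIcc hx' right_mem_uIcc
  rw [← uIcc_of_le hab] at hf
  have ftc_left : ∫ t in a..x, f' t = f x := by
    rw [integral_eq_sub_of_hasDerivAt (fun t ht => hf t (hsub_left ht))
      (hf'.mono_set hsub_left), ha, sub_zero]
  have ftc_right : ∫ t in x..b, f' t = -f x := by
    rw [integral_eq_sub_of_hasDerivAt (fun t ht => hf t (hsub_right ht))
      (hf'.mono_set hsub_right), hb, zero_sub]
  calc 2 * |f x| = |∫ t in a..x, f' t| + |∫ t in x..b, f' t| := by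
        rw [ftc_left, ftc_right, abs_neg, two_mul]
    _ ≤ (∫ t in a..x, |f' t|) + ∫ t in x..b, |f' t| :=
        add_le_add (abs_integral_le_integral_abs hx.1) (abs_integral_le_integral_abs hx.2)
    _ = ∫ t in a..b, |f' t| :=
        integral_add_adjacent_intervals (hf'.abs.mono_set hsub_left) (hf'.abs.mono_set hsub_right)

theorem sq_le_integral_abs_mul_deriv {g g' : ℝ → ℝ} {a b x : ℝ}
    (hg : ∀ t ∈ Icc a b, HasDerivAt g (g' t) t) (hg' : ContinuousOn g' (Icc a b))
    (ha : g a = 0) (hb : g b = 0) (hx : x ∈ Icc a b) :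
    g x ^ 2 ≤ ∫ t in a..b, |g t * g' t| := by
  have hgc : ContinuousOn g (Icc a b) := fun t ht => (hg t ht).continuousAt.continuousWithinAt
  have hsq : ∀ t ∈ Icc a b, HasDerivAt (fun t => g t ^ 2) (2 * (g t * g' t)) t :=
    fun t ht => ((hg t ht).fun_pow 2).congr_deriv (by ring)
  have h := two_mul_abs_le_integral_abs_deriv hsq
    ((continuousOn_const.mul (hgc.mul hg')).intervalIntegrable_of_Icc (hx.1.trans hx.2))
    (by simp [ha]) (by simp [hb]) hx
  simp only [abs_mul (2 : ℝ), abs_two, intervalIntegral.integral_const_mul, abs_sq] at h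
  linarith

theorem integral_abs_mul_le_sqrt_mul_sqrt {f g : ℝ → ℝ} {a b : ℝ} (hab : a ≤ b)
    (hf : ContinuousOn f (Icc a b)) (hg : ContinuousOn g (Icc a b)) :
    ∫ x in a..b, |f x * g x| ≤ √(∫ x in a..b, f x ^ 2) * √(∫ x in a..b, g x ^ 2) := by
  have memLp_abs : ∀ h : ℝ → ℝ, ContinuousOn h (Icc a b) →
      MemLp (fun x => |h x|) (ENNReal.ofReal 2) (volume.restrict (Ioc a b)) := by
    intro h hh
    rw [ENNReal.ofReal_ofNat, memLp_two_iff_integrable_sq]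
    · exact (hh.abs.pow 2).integrableOn_Icc.mono_set Ioc_subset_Icc_self
    · exact (hh.abs.aestronglyMeasurable measurableSet_Icc).mono_measure
        (Measure.restrict_mono Ioc_subset_Icc_self le_rfl)
  have holder := integral_mul_le_Lp_mul_Lq_of_nonneg HolderConjugate.two_two
    (ae_of_all _ fun x => abs_nonneg (f x)) (ae_of_all _ fun x => abs_nonneg (g x))
    (memLp_abs f hf) (memLp_abs g hg)
  simpa only [integral_of_le hab, abs_mul, rpow_two, sq_abs, sqrt_eq_rpow] using holder

theorem integral_sq_le_integral_abs_mul_of_abs_le {g : ℝ → ℝ} {a b M : ℝ} (hab : a ≤ b)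
    (hg : ContinuousOn g (Icc a b)) (hM : ∀ x ∈ Icc a b, |g x| ≤ M) :
    ∫ x in a..b, g x ^ 2 ≤ (∫ x in a..b, |g x|) * M := by
  rw [← intervalIntegral.integral_mul_const]
  refine integral_mono_on hab ((hg.pow 2).intervalIntegrable_of_Icc hab)
    ((hg.abs.intervalIntegrable_of_Icc hab).mul_const M) fun x hx => ?_
  rw [← sq_abs, sq]
  exact mul_le_mul_of_nonneg_left (hM x hx) (abs_nonneg _)

theorem le_rpow_mul_rpow_of_sq_le_mul_sqrt {a b c : ℝ} (ha : 0 ≤ a) (hb : 0 ≤ b) (hc : 0 ≤ c)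
    (h : b ^ 2 ≤ a * √(b * c)) : b ≤ a ^ (2 / 3 : ℝ) * c ^ (1 / 3 : ℝ) := by
  have hcube : b ^ 3 ≤ a ^ 2 * c := by
    have h4 : b ^ 4 ≤ a ^ 2 * (b * c) := by
      have := pow_le_pow_left₀ (sq_nonneg b) h 2
      rwa [mul_pow, sq_sqrt (mul_nonneg hb hc), ← pow_mul] at this
    rcases hb.eq_or_lt with rfl | hb
    · simpa using mul_nonneg (sq_nonneg a) hc
    · nlinarith
  calc b = (b ^ 3) ^ (1 / 3 : ℝ) := by
        rw [← rpow_natCast, ← rpow_mul hb]; norm_num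
    _ ≤ (a ^ 2 * c) ^ (1 / 3 : ℝ) := by gcongr
    _ = a ^ (2 / 3 : ℝ) * c ^ (1 / 3 : ℝ) := by
        rw [mul_rpow (by positivity) hc, ← rpow_natCast, ← rpow_mul ha]; norm_num

/-- Interpolation inequality: for a `C¹` function `g` on `[0,1]` with `g(0) = g(1) = 0`
one has `‖g‖_{L²} ≤ ‖g‖_{L¹}^{2/3} ‖g'‖_{L²}^{1/3}`. -/
theorem L2_le_L1_rpow_mul_L2_deriv_rpow
    (g g' : ℝ → ℝ)
    (hg : ∀ x ∈ Icc (0:ℝ) 1, HasDerivAt g (g' x) x)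
    (hg' : ContinuousOn g' (Icc 0 1))
    (h0 : g 0 = 0) (h1 : g 1 = 0) :
    Real.sqrt (∫ x in (0:ℝ)..1, (g x) ^ 2)
      ≤ (∫ x in (0:ℝ)..1, |g x|) ^ ((2:ℝ)/3) *
        (∫ x in (0:ℝ)..1, (g' x) ^ 2) ^ ((1:ℝ)/6) := by
  have hgc : ContinuousOn g (Icc 0 1) := fun x hx => (hg x hx).continuousAt.continuousWithinAt
  have hL1 : 0 ≤ ∫ x in (0:ℝ)..1, |g x| := integral_nonneg zero_le_one fun _ _ => abs_nonneg _
  have hL2 : 0 ≤ ∫ x in (0:ℝ)..1, g x ^ 2 := integral_nonneg zero_le_one fun _ _ => sq_nonneg _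
  have hL2_deriv : 0 ≤ ∫ x in (0:ℝ)..1, g' x ^ 2 :=
    integral_nonneg zero_le_one fun _ _ => sq_nonneg _
  have hsup : ∀ x ∈ Icc (0:ℝ) 1, |g x| ≤ √(∫ t in (0:ℝ)..1, |g t * g' t|) :=
    fun x hx => abs_le_sqrt (sq_le_integral_abs_mul_deriv hg hg' h0 h1 hx)
  have hsq_le : √(∫ x in (0:ℝ)..1, g x ^ 2) ^ 2 ≤ (∫ x in (0:ℝ)..1, |g x|) *
      √(√(∫ x in (0:ℝ)..1, g x ^ 2) * √(∫ x in (0:ℝ)..1, g' x ^ 2)) := by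
    rw [sq_sqrt hL2]
    refine (integral_sq_le_integral_abs_mul_of_abs_le zero_le_one hgc hsup).trans ?_
    gcongr
    exact integral_abs_mul_le_sqrt_mul_sqrt zero_le_one hgc hg'
  calc _ ≤ _ := le_rpow_mul_rpow_of_sq_le_mul_sqrt hL1 (sqrt_nonneg _) (sqrt_nonneg _) hsq_le
    _ = _ := by rw [sqrt_eq_rpow, ← rpow_mul hL2_deriv]; norm_num
end

section
/- Let g : ℝ → ℝ be continuously differentiable, 1-periodic (g(x+1) = g(x) for all x ∈ ℝ), and of zero mean, ∫₀¹ g(x) dx = 0. Then sup_{x∈ℝ} |g(x)| ≤ (∫₀¹ g'(x)² dx)^{1/2}. -/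
/-!
Zero mean gives a zero of `g`, and by periodicity a zero `x₀ ∈ (x - 1, x]`. Then
`g x = ∫_{x₀}^x g'`, and Cauchy–Schwarz on this interval of length at most `1` bounds `(g x)²` by
the integral of `g'²` over it, hence over a whole period.
-/

open Set Real

open MeasureTheory (volume)
open intervalIntegral

theorem Function.Periodic.hasDerivAt_periodic {𝕜 F : Type*} [NontriviallyNormedField 𝕜]
    [NormedAddCommGroup F] [NormedSpace 𝕜 F] {g g' : 𝕜 → F} {c : 𝕜} (hper : Function.Periodic g c)
    (hg : ∀ x, HasDerivAt g (g' x) x) : Function.Periodic g' c := fun x => by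
  have h := (hg (x + c)).comp_add_const x c
  rw [show (fun y => g (y + c)) = g from funext hper] at h
  exact h.unique (hg x)

theorem exists_eq_zero_of_intervalIntegral_eq_zero {f : ℝ → ℝ} {a b : ℝ} (hab : a ≠ b)
    (hf : ContinuousOn f (uIcc a b)) (h : ∫ x in a..b, f x = 0) : ∃ c ∈ uIcc a b, f c = 0 := by
  obtain ⟨c, hc, hfc⟩ := exists_eq_const_mul_intervalIntegral_of_nonneg (μ := volume)
    (g := fun _ => 1) hf intervalIntegrable_const (fun _ _ => zero_le_one)
  simp only [mul_one, h, integral_const, smul_eq_mul] at hfc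
  exact ⟨c, hc, (mul_eq_zero.1 hfc.symm).resolve_right (sub_ne_zero.2 hab.symm)⟩

theorem sq_intervalIntegral_le_mul_intervalIntegral_sq {f : ℝ → ℝ} {a b : ℝ} (hab : a ≤ b)
    (hf : IntervalIntegrable f volume a b) (hf2 : IntervalIntegrable (fun x => f x ^ 2) volume a b) :
    (∫ x in a..b, f x) ^ 2 ≤ (b - a) * ∫ x in a..b, f x ^ 2 := by
  rcases hab.eq_or_lt with rfl | hab
  · simp
  set I := ∫ x in a..b, f x
  have hexpand : ∫ x in a..b, ((b - a) * f x - I) ^ 2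
      = (b - a) * ((b - a) * (∫ x in a..b, f x ^ 2) - I ^ 2) := by
    have : (fun x => ((b - a) * f x - I) ^ 2)
        = fun x => ((b - a) ^ 2 * f x ^ 2 - 2 * (b - a) * I * f x) + I ^ 2 := by
      ext x; ring
    rw [this, integral_add ((hf2.const_mul _).sub (hf.const_mul _)) intervalIntegrable_const,
      integral_sub (hf2.const_mul _) (hf.const_mul _), integral_const_mul, integral_const_mul,
      integral_const, smul_eq_mul]
    ring
  have hnonneg : 0 ≤ (b - a) * ((b - a) * (∫ x in a..b, f x ^ 2) - I ^ 2) :=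
    hexpand ▸ integral_nonneg hab.le fun x _ => sq_nonneg _
  linarith [(mul_nonneg_iff_of_pos_left (sub_pos.2 hab)).1 hnonneg]

/-- For a `C¹`, `1`-periodic function `g` of zero mean one has
`sup_{x∈ℝ} |g(x)| ≤ (∫₀¹ g'(x)² dx)^{1/2}`. -/
theorem periodic_sup_le_L2_of_deriv
    (g g' : ℝ → ℝ)
    (hg : ∀ x : ℝ, HasDerivAt g (g' x) x)
    (hg' : Continuous g')
    (hper : ∀ x : ℝ, g (x + 1) = g x)
    (hmean : (∫ x in (0:ℝ)..1, g x) = 0) :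
    ∀ x : ℝ, |g x| ≤ Real.sqrt (∫ x in (0:ℝ)..1, (g' x) ^ 2) := by
  intro x
  have hgc : Continuous g := continuous_iff_continuousAt.2 fun y => (hg y).continuousAt
  obtain ⟨c, -, hc⟩ := exists_eq_zero_of_intervalIntegral_eq_zero one_ne_zero.symm
    hgc.continuousOn hmean
  obtain ⟨x₀, ⟨hx₀, hxx₀⟩, hgx₀⟩ := Function.Periodic.exists_mem_Ioc hper one_pos c (x - 1)
  rw [sub_add_cancel] at hxx₀
  have hgx : g x = ∫ t in x₀..x, g' t := by
    rw [integral_eq_sub_of_hasDerivAt (fun t _ => hg t) (hg'.intervalIntegrable _ _), ← hgx₀, hc,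
      sub_zero]
  have hsq : (∫ t in x₀..x, g' t ^ 2) ≤ ∫ t in (0:ℝ)..1, g' t ^ 2 :=
    calc (∫ t in x₀..x, g' t ^ 2) ≤ ∫ t in x₀..x₀ + 1, g' t ^ 2 :=
          integral_mono_interval le_rfl hxx₀ (by linarith) (.of_forall fun t => sq_nonneg _)
            ((hg'.pow 2).intervalIntegrable _ _)
      _ = ∫ t in (0:ℝ)..1, g' t ^ 2 := by
          simpa using ((Function.Periodic.hasDerivAt_periodic hper hg).comp (· ^ 2)
            |>.intervalIntegral_add_eq x₀ 0)
  refine Real.abs_le_sqrt ?_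
  calc g x ^ 2 ≤ (x - x₀) * ∫ t in x₀..x, g' t ^ 2 :=
        hgx ▸ sq_intervalIntegral_le_mul_intervalIntegral_sq hxx₀
          (hg'.intervalIntegrable _ _) ((hg'.pow 2).intervalIntegrable _ _)
    _ ≤ 1 * ∫ t in (0:ℝ)..1, g' t ^ 2 :=
        mul_le_mul (by linarith) hsq (integral_nonneg hxx₀ fun t _ => sq_nonneg _) zero_le_one
    _ = ∫ t in (0:ℝ)..1, g' t ^ 2 := one_mul _
end

section
/- Let M > 0 and let a : [0,∞) × ℝ → ℝ be continuous, 1-periodic in the space variable, with |a(τ,x)| ≤ M for all (τ,x). Let y : [0,∞) × ℝ → ℝ be continuous together with ∂_τy, ∂ₓy, ∂ₓₓy, be 1-periodic in the space variable and satisfy ∂_τy(τ,x) − ∂ₓₓy(τ,x) − a(τ,x)∂ₓy(τ,x) = 0 for all τ > 0 and x ∈ ℝ. If the initial profile x ↦ y(0,x) is not a constant function, then max_{x∈[0,1]} |y(τ,x)| < max_{x∈[0,1]} |y(0,x)| for every τ > 0. (Strict decrease of the sup-norm, by the strong maximum principle and the Hopf boundary point lemma.) -/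
/-!
Both `y` and `-y` are subsolutions of `∂_τ z ≤ ∂ₓₓ z + a ∂ₓ z`, so it suffices to show that a
1-periodic subsolution `z` with `z(0, ·) ≤ m`, and `z(0, c) < m` somewhere, satisfies `z < m` at
every positive time. The weak maximum principle (at a maximum point of `z - ε τ` the equation
fails) gives `z ≤ m`. Since `z(0, ·) ≤ m - δ` near `c`, comparing `z` with `m - δ (G - β)`, where
`G` is a Gaussian subsolution centred at `c` and `β` its initial value at the edge of that
neighbourhood, gives `z(T, ·) < m` on a whole period, hence everywhere, for all small `T > 0`.
Starting the weak maximum principle at such a `T` propagates the strict bound to all later times.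
-/

open Set Real

/-- Spatial partial derivative ∂ₓy(τ,x). -/
noncomputable def partialX (y : ℝ → ℝ → ℝ) (τ x : ℝ) : ℝ := deriv (y τ) x

/-- Temporal partial derivative ∂_τy(τ,x). -/
noncomputable def partialT (y : ℝ → ℝ → ℝ) (τ x : ℝ) : ℝ := deriv (fun σ => y σ x) τ

/-- Second spatial partial derivative ∂ₓₓy(τ,x). -/
noncomputable def partialXX (y : ℝ → ℝ → ℝ) : ℝ → ℝ → ℝ := partialX (partialX y)

open Filter Topology Function

theorem IsLocalMax.nonpos_of_hasDerivAt_deriv {f f' : ℝ → ℝ} {x c : ℝ} (h : IsLocalMax f x)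
    (hf : ∀ᶠ ξ in 𝓝 x, HasDerivAt f (f' ξ) ξ) (hf' : HasDerivAt f' c x) : c ≤ 0 := by
  have hderiv : deriv f =ᶠ[𝓝 x] f' := hf.mono fun ξ hξ => hξ.deriv
  by_contra! hc
  have hmin : IsLocalMin f x :=
    isLocalMin_of_deriv_deriv_pos (by rwa [hderiv.deriv_eq, hf'.deriv]) h.deriv_eq_zero
      hf.self_of_nhds.continuousAt
  have hconst : f =ᶠ[𝓝 x] fun _ => f x :=
    (h.and hmin).mono fun ξ hξ => le_antisymm hξ.1 hξ.2
  have hzero : f' =ᶠ[𝓝 x] fun _ => 0 :=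
    hderiv.symm.trans (hconst.deriv.trans (Eventually.of_forall fun ξ => deriv_const ξ (f x)))
  exact hc.ne' ((hf'.congr_of_eventuallyEq hzero.symm).unique (hasDerivAt_const x 0))

theorem IsMaxOn.nonneg_of_hasDerivAt {g : ℝ → ℝ} {s t d : ℝ} (h : IsMaxOn g (Icc s t) t)
    (hst : s < t) (hg : HasDerivAt g d t) : 0 ≤ d := by
  have hcone : s - t ∈ posTangentConeAt (Icc s t) t :=
    sub_mem_posTangentConeAt_of_segment_subset
      (segment_symm ℝ s t ▸ (segment_eq_Icc hst.le).subset)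
  have hle : (s - t) * d ≤ 0 := by
    simpa using h.localize.hasFDerivWithinAt_nonpos hg.hasFDerivAt.hasFDerivWithinAt hcone
  exact nonneg_of_mul_nonpos_right hle (sub_neg.2 hst)

theorem Function.Periodic.le_of_forall_mem_Icc_le {f : ℝ → ℝ} {c C : ℝ} (hf : Periodic f c)
    (hc : 0 < c) (h : ∀ x ∈ Icc 0 c, f x ≤ C) (x : ℝ) : f x ≤ C := by
  obtain ⟨x', hx', hfx⟩ := hf.exists_mem_Ico₀ hc x
  exact hfx ▸ h x' (Ico_subset_Icc_self hx')

/-- `zx` is the derivative of `z τ` on a whole neighbourhood of `x`, so that `zxx` is a genuine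
second derivative. -/
def IsSubsolutionAt (a z : ℝ → ℝ → ℝ) (τ x : ℝ) : Prop :=
  ∃ (zx : ℝ → ℝ) (zt zxx : ℝ), (∀ᶠ ξ in 𝓝 x, HasDerivAt (z τ) (zx ξ) ξ) ∧
    HasDerivAt zx zxx x ∧ HasDerivAt (fun σ => z σ x) zt τ ∧ zt ≤ zxx + a τ x * zx x

namespace IsSubsolutionAt

variable {a z w : ℝ → ℝ → ℝ} {τ x : ℝ}

theorem add (hz : IsSubsolutionAt a z τ x) (hw : IsSubsolutionAt a w τ x) :
    IsSubsolutionAt a (fun σ ξ => z σ ξ + w σ ξ) τ x := by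
  obtain ⟨zx, zt, zxx, hzx, hzxx, hzt, hz⟩ := hz
  obtain ⟨wx, wt, wxx, hwx, hwxx, hwt, hw⟩ := hw
  refine ⟨zx + wx, zt + wt, zxx + wxx, ?_, hzxx.add hwxx, hzt.add hwt, ?_⟩
  · filter_upwards [hzx, hwx] with ξ h₁ h₂ using h₁.add h₂
  · simp only [Pi.add_apply]
    linarith

theorem const_mul (hz : IsSubsolutionAt a z τ x) {c : ℝ} (hc : 0 ≤ c) :
    IsSubsolutionAt a (fun σ ξ => c * z σ ξ) τ x := by
  obtain ⟨zx, zt, zxx, hzx, hzxx, hzt, hz⟩ := hz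
  refine ⟨fun ξ => c * zx ξ, c * zt, c * zxx, ?_, hzxx.const_mul c, hzt.const_mul c, ?_⟩
  · filter_upwards [hzx] with ξ h using h.const_mul c
  · nlinarith

theorem sub_const (hz : IsSubsolutionAt a z τ x) (c : ℝ) :
    IsSubsolutionAt a (fun σ ξ => z σ ξ - c) τ x := by
  obtain ⟨zx, zt, zxx, hzx, hzxx, hzt, hz⟩ := hz
  exact ⟨zx, zt, zxx, hzx.mono fun ξ h => h.sub_const c, hzxx, hzt.sub_const c, hz⟩

theorem not_isMaxOn (h : IsSubsolutionAt a z τ x) (hx : IsLocalMax (z τ) x) {s ε : ℝ}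
    (hs : s < τ) (hε : 0 < ε) : ¬ IsMaxOn (fun σ => z σ x - ε * σ) (Icc s τ) τ := by
  obtain ⟨zx, zt, zxx, hzx, hzxx, hzt, hz⟩ := h
  intro hmax
  have hzx0 : zx x = 0 := hx.hasDerivAt_eq_zero hzx.self_of_nhds
  have hzxx0 : zxx ≤ 0 := hx.nonpos_of_hasDerivAt_deriv hzx hzxx
  have hzt0 : 0 ≤ zt - ε * 1 :=
    hmax.nonneg_of_hasDerivAt hs (hzt.sub ((hasDerivAt_id τ).const_mul ε))
  rw [hzx0, mul_zero] at hz
  linarith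

end IsSubsolutionAt

theorem isSubsolutionAt_of_pde {a y : ℝ → ℝ → ℝ} {τ x : ℝ}
    (hyt : DifferentiableAt ℝ (fun σ => y σ x) τ) (hyx : ∀ ξ, DifferentiableAt ℝ (y τ) ξ)
    (hyxx : DifferentiableAt ℝ (partialX y τ) x)
    (heq : partialT y τ x - partialXX y τ x - a τ x * partialX y τ x = 0) :
    IsSubsolutionAt a y τ x ∧ IsSubsolutionAt a (fun σ ξ => -y σ ξ) τ x :=
  ⟨⟨partialX y τ, partialT y τ x, partialXX y τ x,
      Eventually.of_forall fun ξ => (hyx ξ).hasDerivAt, hyxx.hasDerivAt, hyt.hasDerivAt,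
      by linarith⟩,
    ⟨fun ξ => -partialX y τ ξ, -partialT y τ x, -partialXX y τ x,
      Eventually.of_forall fun ξ => (hyx ξ).hasDerivAt.neg, hyxx.hasDerivAt.neg,
      hyt.hasDerivAt.neg, by linarith⟩⟩

section MaximumPrinciple

variable {a z : ℝ → ℝ → ℝ} {t₀ t₁ A B C : ℝ}

theorem weak_maximum_principle (hz : ContinuousOn (uncurry z) (Icc t₀ t₁ ×ˢ Icc A B))
    (hsub : ∀ τ ∈ Ioc t₀ t₁, ∀ x ∈ Icc A B, IsSubsolutionAt a z τ x)
    (hinit : ∀ x ∈ Icc A B, z t₀ x ≤ C)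
    (hloc : ∀ τ ∈ Ioc t₀ t₁, ∀ x ∈ Icc A B, C < z τ x →
      IsMaxOn (z τ) (Icc A B) x → IsLocalMax (z τ) x) :
    ∀ τ ∈ Icc t₀ t₁, ∀ x ∈ Icc A B, z τ x ≤ C := by
  intro τ hτ x hx
  suffices h : ∀ ε > 0, z τ x ≤ C + ε * (τ - t₀) by
    have hlim : Tendsto (fun ε => C + ε * (τ - t₀)) (𝓝[>] 0) (𝓝 C) := by
      simpa using ((tendsto_id.mul_const (τ - t₀)).const_add C).mono_left
        (nhdsWithin_le_nhds (a := (0 : ℝ)))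
    exact ge_of_tendsto hlim (eventually_nhdsWithin_of_forall h)
  intro ε hε
  have hF : ContinuousOn (fun p : ℝ × ℝ => z p.1 p.2 - ε * p.1) (Icc t₀ t₁ ×ˢ Icc A B) :=
    hz.sub (continuous_const.mul continuous_fst).continuousOn
  obtain ⟨⟨τ₀, x₀⟩, ⟨hτ₀, hx₀⟩, hmax⟩ :=
    (isCompact_Icc.prod isCompact_Icc).exists_isMaxOn ⟨(τ, x), hτ, hx⟩ hF
  by_contra! hlt
  have hτx : z τ x - ε * τ ≤ z τ₀ x₀ - ε * τ₀ := hmax (mk_mem_prod hτ hx)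
  have hC : C + ε * (τ₀ - t₀) < z τ₀ x₀ := by linarith
  have hτ₀' : t₀ < τ₀ := hτ₀.1.lt_of_ne (by rintro rfl; linarith [hinit x₀ hx₀])
  have hspace : IsMaxOn (z τ₀) (Icc A B) x₀ := fun ξ hξ =>
    (sub_le_sub_iff_right (ε * τ₀)).1 (hmax (mk_mem_prod hτ₀ hξ))
  have htime : IsMaxOn (fun σ => z σ x₀ - ε * σ) (Icc t₀ τ₀) τ₀ := fun σ hσ =>
    hmax (mk_mem_prod ⟨hσ.1, hσ.2.trans hτ₀.2⟩ hx₀)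
  have hlocmax := hloc τ₀ ⟨hτ₀', hτ₀.2⟩ x₀ hx₀
    (by nlinarith [mul_pos hε (sub_pos.2 hτ₀')]) hspace
  exact (hsub τ₀ ⟨hτ₀', hτ₀.2⟩ x₀ hx₀).not_isMaxOn hlocmax hτ₀' hε htime

theorem weak_maximum_principle_of_periodic
    (hz : ContinuousOn (uncurry z) (Icc t₀ t₁ ×ˢ univ)) (hper : ∀ τ, Periodic (z τ) 1)
    (hsub : ∀ τ ∈ Ioc t₀ t₁, ∀ x, IsSubsolutionAt a z τ x) (hinit : ∀ x, z t₀ x ≤ C) :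
    ∀ τ ∈ Icc t₀ t₁, ∀ x, z τ x ≤ C := by
  have h := weak_maximum_principle (A := 0) (B := 1)
    (hz.mono (prod_mono le_rfl (subset_univ _))) (fun τ hτ x _ => hsub τ hτ x)
    (fun x _ => hinit x)
    fun τ _ x _ _ hmax => Eventually.of_forall ((hper τ).le_of_forall_mem_Icc_le one_pos hmax)
  exact fun τ hτ => (hper τ).le_of_forall_mem_Icc_le one_pos (h τ hτ)

theorem weak_maximum_principle_of_boundary
    (hz : ContinuousOn (uncurry z) (Icc t₀ t₁ ×ˢ Icc A B))
    (hsub : ∀ τ ∈ Ioc t₀ t₁, ∀ x ∈ Icc A B, IsSubsolutionAt a z τ x)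
    (hinit : ∀ x ∈ Icc A B, z t₀ x ≤ C) (hleft : ∀ τ ∈ Ioc t₀ t₁, z τ A ≤ C)
    (hright : ∀ τ ∈ Ioc t₀ t₁, z τ B ≤ C) :
    ∀ τ ∈ Icc t₀ t₁, ∀ x ∈ Icc A B, z τ x ≤ C := by
  refine weak_maximum_principle hz hsub hinit fun τ hτ x hx hCx hmax => hmax.isLocalMax ?_
  have hA : A < x := hx.1.lt_of_ne (by rintro rfl; linarith [hleft τ hτ])
  have hB : x < B := hx.2.lt_of_ne (by rintro rfl; linarith [hright τ hτ])
  exact Icc_mem_nhds hA hB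

end MaximumPrinciple

section GaussianBarrier

/-- The heat kernel centred at `c` and started at time `-s`, without its factor
`√(s / (τ + s))`, damped by `e^{-K τ}`. -/
noncomputable def gaussianBarrier (s K c τ x : ℝ) : ℝ :=
  exp (-(x - c) ^ 2 / (2 * (τ + s)) - K * τ)

variable {s K c τ x : ℝ}

theorem continuousOn_gaussianBarrier (hs : 0 < s) :
    ContinuousOn (uncurry (gaussianBarrier s K c)) (Ici 0 ×ˢ univ) := by
  refine ContinuousOn.rexp (ContinuousOn.sub (ContinuousOn.div (by fun_prop) (by fun_prop) ?_)
    (by fun_prop))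
  rintro ⟨τ, x⟩ ⟨hτ, -⟩
  have : (0 : ℝ) ≤ τ := hτ
  positivity

theorem hasDerivAt_gaussianBarrier_x (hτs : τ + s ≠ 0) (x : ℝ) :
    HasDerivAt (gaussianBarrier s K c τ)
      (-((x - c) / (τ + s)) * gaussianBarrier s K c τ x) x := by
  have h := ((((hasDerivAt_id' x).sub_const c).fun_pow 2).fun_neg.div_const
    (2 * (τ + s))).sub_const (K * τ) |>.exp
  refine h.congr_deriv ?_
  simp only [gaussianBarrier]
  field_simp
  ring

theorem hasDerivAt_gaussianBarrier_t (hτs : τ + s ≠ 0) (x : ℝ) :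
    HasDerivAt (fun σ => gaussianBarrier s K c σ x)
      (((x - c) ^ 2 / (2 * (τ + s) ^ 2) - K) * gaussianBarrier s K c τ x) τ := by
  have hden : HasDerivAt (fun σ => 2 * (σ + s)) 2 τ := by
    simpa using ((hasDerivAt_id' τ).add_const s).const_mul 2
  have h := (((hasDerivAt_const τ (-(x - c) ^ 2)).fun_div hden (by simpa using hτs)).fun_sub
    ((hasDerivAt_id' τ).const_mul K)).exp
  refine h.congr_deriv ?_
  simp only [gaussianBarrier]
  field_simp
  ring

theorem isSubsolutionAt_gaussianBarrier {a : ℝ → ℝ → ℝ} {M : ℝ} (hs : 0 < s) (hτ : 0 ≤ τ)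
    (ha : |a τ x| ≤ M) (hK : 1 / s + M ^ 2 / 2 ≤ K) :
    IsSubsolutionAt a (gaussianBarrier s K c) τ x := by
  have ht : 0 < τ + s := by linarith
  have hzxx : HasDerivAt (fun ξ => -((ξ - c) / (τ + s)) * gaussianBarrier s K c τ ξ)
      (((x - c) ^ 2 / (τ + s) ^ 2 - 1 / (τ + s)) * gaussianBarrier s K c τ x) x := by
    have h := (((hasDerivAt_id' x).sub_const c).div_const (τ + s)).fun_neg.mul
      (hasDerivAt_gaussianBarrier_x (K := K) (c := c) ht.ne' x)
    refine h.congr_deriv ?_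
    field_simp
    ring
  refine ⟨fun ξ => -((ξ - c) / (τ + s)) * gaussianBarrier s K c τ ξ, _, _,
    Eventually.of_forall (hasDerivAt_gaussianBarrier_x ht.ne'), hzxx,
    hasDerivAt_gaussianBarrier_t ht.ne' x, ?_⟩
  -- with `u = (x - c) / (τ + s)`, dividing by the barrier leaves `1 / (τ + s) + a u ≤ u² / 2 + K`
  set u := (x - c) / (τ + s)
  have hu : (x - c) ^ 2 / (τ + s) ^ 2 = u ^ 2 := by rw [div_pow]
  have hu2 : (x - c) ^ 2 / (2 * (τ + s) ^ 2) = u ^ 2 / 2 := by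
    rw [div_pow]
    field_simp
  have hts : 1 / (τ + s) ≤ 1 / s := one_div_le_one_div_of_le hs (by linarith)
  have hau : a τ x * u ≤ u ^ 2 / 2 + M ^ 2 / 2 := by
    have : a τ x * u ≤ M * |u| := (le_abs_self _).trans (by
      rw [abs_mul]
      exact mul_le_mul_of_nonneg_right ha (abs_nonneg u))
    nlinarith [sq_nonneg (|u| - M), sq_abs u]
  have hG : 0 < gaussianBarrier s K c τ x := exp_pos _
  rw [hu, hu2]
  nlinarith

theorem gaussianBarrier_le (hs : 0 < s) (hτ : 0 ≤ τ) (hK : 0 ≤ K) {T : ℝ} (hT : 0 < T)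
    (h : τ + s ≤ T * (x - c) ^ 2) : gaussianBarrier s K c τ x ≤ exp (-(1 / (2 * T))) := by
  refine exp_le_exp.2 ?_
  have h1 : 1 / (2 * T) ≤ (x - c) ^ 2 / (2 * (τ + s)) := by
    rw [div_le_div_iff₀ (by positivity) (by positivity)]
    nlinarith
  have h2 : 0 ≤ K * τ := mul_nonneg hK hτ
  rw [neg_div]
  linarith

theorem exp_lt_gaussianBarrier (hs : 0 < s) {T : ℝ} (hT : 0 < T) (hx : (x - c) ^ 2 ≤ 1 / 4)
    (hK : K * T ^ 2 < 3 / 8) : exp (-(1 / (2 * T))) < gaussianBarrier s K c T x := by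
  refine exp_lt_exp.2 ?_
  have h1 : (x - c) ^ 2 / (2 * (T + s)) ≤ 1 / (8 * T) := by
    rw [div_le_div_iff₀ (by positivity) (by positivity)]
    nlinarith
  have h2 : K * T < 3 / (8 * T) := by
    rw [lt_div_iff₀ (by positivity)]
    nlinarith
  have h3 : 1 / (2 * T) = 1 / (8 * T) + 3 / (8 * T) := by
    field_simp
    norm_num
  rw [neg_div]
  linarith

end GaussianBarrier

section Periodic

variable {a z : ℝ → ℝ → ℝ} {M m : ℝ}

theorem add_mul_gaussianBarrier_le {δ c ρ T : ℝ}
    (hz : ContinuousOn (uncurry z) (Ici 0 ×ˢ univ))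
    (hsub : ∀ τ > 0, ∀ x, IsSubsolutionAt a z τ x) (ha : ∀ τ > 0, ∀ x, |a τ x| ≤ M)
    (hle : ∀ τ ≥ 0, ∀ x, z τ x ≤ m) (hδ : 0 ≤ δ) (hρ : 0 < ρ) (hρ1 : ρ ≤ 1)
    (hgap : ∀ x ∈ Metric.ball c ρ, z 0 x ≤ m - δ) (hT : 0 < T) :
    ∀ x ∈ Icc (c - 2) (c + 2), z T x + δ * (gaussianBarrier (ρ ^ 2 * T)
      (1 / (ρ ^ 2 * T) + M ^ 2 / 2) c T x - exp (-(1 / (2 * T)))) ≤ m := by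
  -- `s = ρ² T` makes `β` the value of `gaussianBarrier s K c 0` at distance `ρ` from `c`
  set s := ρ ^ 2 * T
  set K := 1 / s + M ^ 2 / 2
  set β := exp (-(1 / (2 * T)))
  have hs : 0 < s := by positivity
  have hK : 0 ≤ K := by positivity
  have hβ : 0 < β := exp_pos _
  have hlat : ∀ τ ∈ Ioc 0 T, ∀ x, (x - c) ^ 2 = 4 →
      z τ x + δ * (gaussianBarrier s K c τ x - β) ≤ m := by
    intro τ hτ x hx
    have hρ2 : ρ ^ 2 ≤ 1 := pow_le_one₀ hρ.le hρ1
    have hG := gaussianBarrier_le hs hτ.1.le hK hT (x := x) (c := c)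
      (by rw [hx]; nlinarith [hτ.2])
    nlinarith [hle τ hτ.1.le x]
  refine weak_maximum_principle_of_boundary (a := a) (t₀ := 0)
    (z := fun τ x => z τ x + δ * (gaussianBarrier s K c τ x - β)) ?_ ?_ ?_
    (fun τ hτ => hlat τ hτ (c - 2) (by ring)) (fun τ hτ => hlat τ hτ (c + 2) (by ring))
    T ⟨hT.le, le_rfl⟩
  · exact (hz.add (continuousOn_const.mul ((continuousOn_gaussianBarrier hs).sub
      continuousOn_const))).mono (prod_mono Icc_subset_Ici_self (subset_univ _))
  · exact fun τ hτ x _ => (hsub τ hτ.1 x).add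
      (((isSubsolutionAt_gaussianBarrier hs hτ.1.le (ha τ hτ.1 x) le_rfl).sub_const
        β).const_mul hδ)
  · intro x _
    by_cases hx : x ∈ Metric.ball c ρ
    · have hG : gaussianBarrier s K c 0 x ≤ 1 := exp_le_one_iff.2 (by
        simp only [mul_zero, sub_zero, neg_div]
        exact neg_nonpos.2 (by positivity))
      nlinarith [hgap x hx]
    · have hρx : ρ ≤ |x - c| := by simpa [Real.dist_eq] using hx
      have hρx2 : ρ ^ 2 ≤ (x - c) ^ 2 := sq_abs (x - c) ▸ pow_le_pow_left₀ hρ.le hρx 2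
      have hG := gaussianBarrier_le hs le_rfl hK hT (x := x) (c := c)
        (by rw [zero_add, mul_comm]; exact mul_le_mul_of_nonneg_right hρx2 hT.le)
      nlinarith [hle 0 le_rfl x]

theorem eventually_forall_lt_of_initial_gap {δ c : ℝ}
    (hz : ContinuousOn (uncurry z) (Ici 0 ×ˢ univ)) (hper : ∀ τ, Periodic (z τ) 1)
    (hsub : ∀ τ > 0, ∀ x, IsSubsolutionAt a z τ x) (ha : ∀ τ > 0, ∀ x, |a τ x| ≤ M)
    (hle : ∀ τ ≥ 0, ∀ x, z τ x ≤ m) (hδ : 0 < δ) (hgap : ∀ᶠ x in 𝓝 c, z 0 x ≤ m - δ) :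
    ∀ᶠ T in 𝓝[>] 0, ∀ x, z T x < m := by
  obtain ⟨ρ₀, hρ₀, hball⟩ := Metric.eventually_nhds_iff_ball.1 hgap
  set ρ := min ρ₀ 1
  have hρ : 0 < ρ := lt_min hρ₀ one_pos
  have hsmall : ∀ᶠ T in 𝓝[>] 0, T / ρ ^ 2 + M ^ 2 * T ^ 2 / 2 < 3 / 8 := by
    have hcont : Continuous fun T : ℝ => T / ρ ^ 2 + M ^ 2 * T ^ 2 / 2 := by fun_prop
    refine nhdsWithin_le_nhds (hcont.continuousAt.eventually_lt continuousAt_const ?_)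
    norm_num
  filter_upwards [hsmall, self_mem_nhdsWithin] with T hT (hT₀ : 0 < T)
  have hcomp := add_mul_gaussianBarrier_le hz hsub ha hle hδ.le hρ (min_le_right _ _)
    (fun x hx => hball x (Metric.ball_subset_ball (min_le_left _ _) hx)) hT₀
  have hKT : (1 / (ρ ^ 2 * T) + M ^ 2 / 2) * T ^ 2 = T / ρ ^ 2 + M ^ 2 * T ^ 2 / 2 := by
    field_simp
  intro x
  obtain ⟨x', hx', hzx⟩ := (hper T).exists_mem_Ico one_pos x (c - 1 / 2)
  have hwin := exp_lt_gaussianBarrier (s := ρ ^ 2 * T) (x := x') (c := c) (by positivity) hT₀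
    (by nlinarith [hx'.1, hx'.2]) (hKT ▸ hT)
  rw [hzx]
  nlinarith [hcomp x' ⟨by linarith [hx'.1], by linarith [hx'.2]⟩]

theorem periodic_strong_maximum_principle
    (hz : ContinuousOn (uncurry z) (Ici 0 ×ˢ univ)) (hper : ∀ τ, Periodic (z τ) 1)
    (hsub : ∀ τ > 0, ∀ x, IsSubsolutionAt a z τ x) (ha : ∀ τ > 0, ∀ x, |a τ x| ≤ M)
    (hinit : ∀ x, z 0 x ≤ m) (hne : ∃ x, z 0 x < m) : ∀ τ > 0, ∀ x, z τ x < m := by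
  have hslice : ∀ τ ≥ 0, Continuous (z τ) := fun τ hτ =>
    continuousOn_univ.1 (hz.uncurry_left τ hτ)
  have hfrom : ∀ t₀ ≥ 0, ∀ C, (∀ x, z t₀ x ≤ C) → ∀ τ ≥ t₀, ∀ x, z τ x ≤ C :=
    fun t₀ ht₀ C hC τ hτ => weak_maximum_principle_of_periodic
      (hz.mono (prod_mono (Icc_subset_Ici_self.trans (Ici_subset_Ici.2 ht₀)) le_rfl)) hper
      (fun σ hσ => hsub σ (ht₀.trans_lt hσ.1)) hC τ ⟨hτ, le_rfl⟩
  obtain ⟨c, hc⟩ := hne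
  have hgap : ∀ᶠ x in 𝓝 c, z 0 x ≤ m - (m - z 0 c) / 2 :=
    ((hslice 0 le_rfl).continuousAt.eventually_lt continuousAt_const (by linarith)).mono
      fun _ h => h.le
  have hsmall := eventually_forall_lt_of_initial_gap hz hper hsub ha
    (fun τ hτ => hfrom 0 le_rfl m hinit τ hτ) (by linarith) hgap
  intro τ hτ x
  obtain ⟨t₀, ht₀, ht₀τ⟩ := (hsmall.and (Ioc_mem_nhdsGT hτ)).exists
  obtain ⟨xm, -, hxm⟩ := isCompact_Icc.exists_isMaxOn (nonempty_Icc.2 zero_le_one)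
    (hslice t₀ ht₀τ.1.le).continuousOn
  calc z τ x ≤ z t₀ xm := hfrom t₀ ht₀τ.1.le _
          ((hper t₀).le_of_forall_mem_Icc_le one_pos hxm) τ ht₀τ.2 x
    _ < m := ht₀ xm

theorem periodic_abs_lt_of_not_const {y : ℝ → ℝ → ℝ}
    (hy : ContinuousOn (uncurry y) (Ici 0 ×ˢ univ)) (hper : ∀ τ, Periodic (y τ) 1)
    (hsub : ∀ τ > 0, ∀ x,
      IsSubsolutionAt a y τ x ∧ IsSubsolutionAt a (fun σ ξ => -y σ ξ) τ x)
    (ha : ∀ τ > 0, ∀ x, |a τ x| ≤ M) (hinit : ∀ x, |y 0 x| ≤ m)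
    (hnc : ¬ ∃ c, ∀ x, y 0 x = c) : ∀ τ > 0, ∀ x, |y τ x| < m := by
  have hbelow : ∃ x, y 0 x < m := by
    by_contra! h
    exact hnc ⟨m, fun x => le_antisymm ((le_abs_self _).trans (hinit x)) (h x)⟩
  have habove : ∃ x, -y 0 x < m := by
    by_contra! h
    exact hnc ⟨-m, fun x => by linarith [neg_abs_le (y 0 x), hinit x, h x]⟩
  have hup := periodic_strong_maximum_principle hy hper (fun τ hτ x => (hsub τ hτ x).1) ha
    (fun x => (le_abs_self _).trans (hinit x)) hbelow
  have hdown := periodic_strong_maximum_principle (z := fun σ ξ => -y σ ξ) hy.neg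
    (fun τ => (hper τ).comp Neg.neg) (fun τ hτ x => (hsub τ hτ x).2) ha
    (fun x => (neg_le_abs _).trans (hinit x)) habove
  exact fun τ hτ x => abs_lt.2 ⟨by linarith [hdown τ hτ x], hup τ hτ x⟩

end Periodic

theorem periodic_drift_diffusion_strong_maximum_principle_general
    (M : ℝ) (a y : ℝ → ℝ → ℝ)
    (haM : ∀ τ x : ℝ, 0 ≤ τ → |a τ x| ≤ M)
    (hyc : ContinuousOn (Function.uncurry y) (Ici 0 ×ˢ univ))
    (hyt : ∀ τ x : ℝ, 0 < τ → DifferentiableAt ℝ (fun σ => y σ x) τ)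
    (hyx : ∀ τ x : ℝ, 0 < τ → DifferentiableAt ℝ (y τ) x)
    (hyxx : ∀ τ x : ℝ, 0 < τ → DifferentiableAt ℝ (partialX y τ) x)
    (hyper : ∀ τ x : ℝ, y τ (x + 1) = y τ x)
    (hyeq : ∀ τ x : ℝ, 0 < τ →
      partialT y τ x - partialXX y τ x - a τ x * partialX y τ x = 0)
    (hnc : ¬ ∃ c : ℝ, ∀ x : ℝ, y 0 x = c) :
    ∀ τ : ℝ, 0 < τ →
      sSup ((fun z => |y τ z|) '' Icc (0:ℝ) 1)
        < sSup ((fun z => |y 0 z|) '' Icc (0:ℝ) 1) := by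
  have hsup : ∀ τ ≥ 0, ∃ x ∈ Icc (0 : ℝ) 1,
      sSup ((fun z => |y τ z|) '' Icc 0 1) = |y τ x| ∧ ∀ ξ ∈ Icc (0 : ℝ) 1, |y τ ξ| ≤ |y τ x| :=
    fun τ hτ => isCompact_Icc.exists_sSup_image_eq_and_ge (nonempty_Icc.2 zero_le_one)
      (continuousOn_univ.1 (hyc.uncurry_left τ hτ)).abs.continuousOn
  obtain ⟨x₀, -, hsup₀, hmax₀⟩ := hsup 0 le_rfl
  have hlt := periodic_abs_lt_of_not_const hyc hyper
    (fun τ hτ x => isSubsolutionAt_of_pde (hyt τ x hτ) (fun ξ => hyx τ ξ hτ) (hyxx τ x hτ)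
      (hyeq τ x hτ)) (fun τ hτ x => haM τ x hτ.le)
    ((Periodic.comp (hyper 0) abs).le_of_forall_mem_Icc_le one_pos hmax₀) hnc
  intro τ hτ
  obtain ⟨xτ, -, hsupτ, -⟩ := hsup τ hτ.le
  rw [hsupτ, hsup₀]
  exact hlt τ hτ xτ

/-- Strict decrease of the sup-norm for the space-periodic linear drift–diffusion
equation `∂_τ y − ∂ₓₓ y − a ∂ₓ y = 0` when the initial profile is not constant
(strong maximum principle and the Hopf boundary point lemma). -/
theorem periodic_drift_diffusion_strong_maximum_principle
    (M : ℝ) (hM : 0 < M) (a y : ℝ → ℝ → ℝ)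
    (hac : ContinuousOn (Function.uncurry a) (Ici 0 ×ˢ univ))
    (haper : ∀ τ x : ℝ, a τ (x + 1) = a τ x)
    (haM : ∀ τ x : ℝ, 0 ≤ τ → |a τ x| ≤ M)
    (hyc : ContinuousOn (Function.uncurry y) (Ici 0 ×ˢ univ))
    (hyt : ∀ τ x : ℝ, 0 < τ → DifferentiableAt ℝ (fun σ => y σ x) τ)
    (hyx : ∀ τ x : ℝ, 0 < τ → DifferentiableAt ℝ (y τ) x)
    (hyxx : ∀ τ x : ℝ, 0 < τ → DifferentiableAt ℝ (partialX y τ) x)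
    (hytc : ContinuousOn (fun p : ℝ × ℝ => partialT y p.1 p.2) (Ioi 0 ×ˢ univ))
    (hyxc : ContinuousOn (fun p : ℝ × ℝ => partialX y p.1 p.2) (Ioi 0 ×ˢ univ))
    (hyxxc : ContinuousOn (fun p : ℝ × ℝ => partialXX y p.1 p.2) (Ioi 0 ×ˢ univ))
    (hyper : ∀ τ x : ℝ, y τ (x + 1) = y τ x)
    (hyeq : ∀ τ x : ℝ, 0 < τ →
      partialT y τ x - partialXX y τ x - a τ x * partialX y τ x = 0)
    (hnc : ¬ ∃ c : ℝ, ∀ x : ℝ, y 0 x = c) :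
    ∀ τ : ℝ, 0 < τ →
      sSup ((fun z => |y τ z|) '' Icc (0:ℝ) 1)
        < sSup ((fun z => |y 0 z|) '' Icc (0:ℝ) 1) :=
  periodic_drift_diffusion_strong_maximum_principle_general M a y haM hyc hyt hyx hyxx hyper hyeq
    hnc
end
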